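/- arXiv:2006.03223 — 3 statements merged into one kernel-verified Lean document; each statement's English description precedes it below -/
import Mathlib

section
/- Let q be a harmonic homogeneous polynomial of degree m on ℝ^d and p a homogeneous polynomial of degree l on ℝ^d. If l - m is negative or odd, then ∫_{S^{d-1}} q(y) p(y) dσ(y) = 0. -/
open MeasureTheory MvPolynomial Finset Metric Topology Asymptotics Real

noncomputable section

/-- Euclidean space `ℝ^d`. -/
abbrev Ed (d : ℕ) := EuclideanSpace ℝ (Fin d)

/-- Multi-index partial derivative on polynomials. -/
def mpderiv {d : ℕ} (s : Fin d →₀ ℕ) (p : MvPolynomial (Fin d) ℝ) : MvPolynomial (Fin d) ℝ :=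
  ((List.finRange d).map (fun j => (fun q : MvPolynomial (Fin d) ℝ => pderiv j q)^[s j])).foldr
    (fun g h => g ∘ h) id p

/-- The constant-coefficient differential operator `q(∇)` acting on polynomials. -/
def dop {d : ℕ} (q p : MvPolynomial (Fin d) ℝ) : MvPolynomial (Fin d) ℝ :=
  (AddMonoidAlgebra.coeff q).sum fun s c => c • mpderiv s p

/-- The Euclidean Laplacian on polynomials. -/
def lap {d : ℕ} (p : MvPolynomial (Fin d) ℝ) : MvPolynomial (Fin d) ℝ :=
  ∑ j : Fin d, pderiv j (pderiv j p)

/-- First-order partial derivative `∂/∂x_j` on functions. -/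
def pdF {d : ℕ} (j : Fin d) (f : Ed d → ℝ) : Ed d → ℝ :=
  fun x => fderiv ℝ f x (EuclideanSpace.single j 1)

/-- Multi-index partial derivative on functions. -/
def mpdF {d : ℕ} (s : Fin d →₀ ℕ) (f : Ed d → ℝ) : Ed d → ℝ :=
  ((List.finRange d).map (fun j => (pdF j)^[s j])).foldr (fun g h => g ∘ h) id f

/-- The operator `q(∇)` acting on smooth functions. -/
def dopF {d : ℕ} (q : MvPolynomial (Fin d) ℝ) (f : Ed d → ℝ) : Ed d → ℝ :=
  fun x => (AddMonoidAlgebra.coeff q).sum fun s c => c * mpdF s f x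

/-- The Euclidean Laplacian on functions. -/
def lapF {d : ℕ} (f : Ed d → ℝ) : Ed d → ℝ :=
  fun x => ∑ j : Fin d, pdF j (pdF j f) x

/-- The surface measure `σ` on the unit sphere `S^{d-1}`. -/
def sphμ (d : ℕ) : Measure (sphere (0 : Ed d) 1) := (volume : Measure (Ed d)).toSphere

/-- The surface area `ω_d` of the unit sphere `S^{d-1}`. -/
def ωd (d : ℕ) : ℝ := ((sphμ d) Set.univ).toReal

/-- The Pochhammer (shifted factorial) symbol `(a)_k`. -/
def poch (a : ℝ) (k : ℕ) : ℝ := ∏ i ∈ Finset.range k, (a + i)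

/-- Evaluation of a polynomial at a point of `ℝ^d`. -/
def evalE {d : ℕ} (p : MvPolynomial (Fin d) ℝ) (x : Ed d) : ℝ := eval (fun j => x j) p

/-- The polynomial `‖x‖² = x_1² + ⋯ + x_d²`. -/
def nsq (d : ℕ) : MvPolynomial (Fin d) ℝ := ∑ j : Fin d, X j ^ 2

/-!
For `f` homogeneous of degree `n`, polar coordinates give
`∫_{ℝ^d} f(x) e^{-‖x‖²} dx = (∫_{S^{d-1}} f dσ) · Γ((d + n) / 2) / 2`, so it suffices that the
Gaussian integral of `f = q p` vanishes. On monomials the Gaussian integral factors into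
one-dimensional moments, whose recursion `G(k + 2) = (k + 1) / 2 · G(k)` yields
`∫ Δf e^{-‖x‖²} = 2n ∫ f e^{-‖x‖²}`. Hence the Gaussian integral of `f` vanishes as soon as
`Δ^N f = 0` for some `N ≤ (n + 1) / 2`. For `f = q p` this holds with `N = ⌈(m + l) / 2⌉`: by
degree when `m + l` is odd, and when `l < m` because `Δ(q u) = q Δu + 2 ∑ⱼ ∂ⱼq ∂ⱼu` with `q`
harmonic again produces products of a harmonic polynomial and one of strictly smaller degree.
-/

namespace MvPolynomial

variable {σ R : Type*} [CommSemiring R]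

theorem pderiv_pderiv_comm (i j : σ) (p : MvPolynomial σ R) :
    pderiv i (pderiv j p) = pderiv j (pderiv i p) := by
  induction p using MvPolynomial.induction_on' with
  | monomial s a =>
    simp only [pderiv_monomial]
    rcases eq_or_ne i j with rfl | hij
    · rfl
    · rw [tsub_tsub, tsub_tsub, add_comm (Finsupp.single j 1), Finsupp.tsub_apply,
        Finsupp.tsub_apply, Finsupp.single_eq_of_ne' hij, Finsupp.single_eq_of_ne' hij.symm,
        Nat.sub_zero, Nat.sub_zero, mul_right_comm]
  | add p q hp hq => simp only [map_add, hp, hq]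

theorem IsHomogeneous.pderiv_eq_zero {p : MvPolynomial σ R} (hp : p.IsHomogeneous 0) (i : σ) :
    pderiv i p = 0 := by
  rw [← totalDegree_zero_iff_isHomogeneous, totalDegree_eq_zero_iff_eq_C] at hp
  rw [hp, pderiv_C]

theorem IsHomogeneous.eval_smul {p : MvPolynomial σ R} {n : ℕ} (hp : p.IsHomogeneous n)
    (r : R) (x : σ → R) : eval (r • x) p = r ^ n * eval x p := by
  simp only [eval_eq, Finset.mul_sum, Pi.smul_apply, smul_eq_mul, mul_pow,
    Finset.prod_mul_distrib, Finset.prod_pow_eq_pow_sum]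
  refine Finset.sum_congr rfl fun α hα => ?_
  rw [← hp.degree_eq_sum_deg_support hα]
  ring

end MvPolynomial

section Laplacian

variable {d : ℕ}

def lapLinearMap (d : ℕ) : Module.End ℝ (MvPolynomial (Fin d) ℝ) :=
  ∑ j : Fin d, (pderiv j).toLinearMap ∘ₗ (pderiv j).toLinearMap

theorem coe_lapLinearMap : ⇑(lapLinearMap d) = lap := by
  ext1 p
  simp [lapLinearMap, lap]

theorem iterate_lap (N : ℕ) : lap^[N] = ⇑(lapLinearMap d ^ N) := by
  rw [Module.End.coe_pow, coe_lapLinearMap]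

theorem lap_pderiv (i : Fin d) (p : MvPolynomial (Fin d) ℝ) :
    lap (pderiv i p) = pderiv i (lap p) := by
  simp only [lap, map_sum, pderiv_pderiv_comm _ i]

theorem lap_mul (a b : MvPolynomial (Fin d) ℝ) :
    lap (a * b) = lap a * b + a * lap b + 2 * ∑ j : Fin d, pderiv j a * pderiv j b := by
  simp only [lap, Finset.mul_sum, Finset.sum_mul, ← Finset.sum_add_distrib]
  refine Finset.sum_congr rfl fun j _ => ?_
  simp only [Derivation.leibniz, map_add, smul_eq_mul]
  ring

theorem MvPolynomial.IsHomogeneous.lap {p : MvPolynomial (Fin d) ℝ} {n : ℕ}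
    (hp : p.IsHomogeneous n) : (lap p).IsHomogeneous (n - 2) :=
  IsHomogeneous.sum _ _ _ fun j _ => by
    simpa [Nat.sub_sub] using (hp.pderiv (i := j)).pderiv (i := j)

theorem lap_eq_zero_of_isHomogeneous_of_le_one {p : MvPolynomial (Fin d) ℝ} {n : ℕ}
    (hp : p.IsHomogeneous n) (hn : n ≤ 1) : lap p = 0 := by
  refine Finset.sum_eq_zero fun j _ => ?_
  have h0 : (pderiv j p).IsHomogeneous 0 := by
    simpa [Nat.sub_eq_zero_of_le hn] using hp.pderiv (i := j)
  rw [h0.pderiv_eq_zero]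

theorem lap_iterate_eq_zero_of_isHomogeneous_of_lt {p : MvPolynomial (Fin d) ℝ} {n N : ℕ}
    (hp : p.IsHomogeneous n) (hN : n < 2 * N) : lap^[N] p = 0 := by
  induction N generalizing p n with
  | zero => omega
  | succ N ih =>
    rw [Function.iterate_succ_apply]
    rcases le_or_gt n 1 with h | h
    · rw [lap_eq_zero_of_isHomogeneous_of_le_one hp h, iterate_lap, map_zero]
    · exact ih hp.lap (by omega)

theorem lap_iterate_mul_eq_zero_of_lap_eq_zero {q u : MvPolynomial (Fin d) ℝ} {m k N : ℕ}
    (hq : lap q = 0) (hqm : q.IsHomogeneous m) (huk : u.IsHomogeneous k) (hkm : k < m)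
    (hN : m + k ≤ 2 * N) : lap^[N] (q * u) = 0 := by
  induction N generalizing q u m k with
  | zero => omega
  | succ N ih =>
    have hlap_mul : lap^[N] (q * lap u) = 0 := by
      rcases le_or_gt k 1 with hk | hk
      · rw [lap_eq_zero_of_isHomogeneous_of_le_one huk hk, mul_zero, iterate_lap, map_zero]
      · exact ih hq hqm huk.lap (by omega) (by omega)
    have hpderiv_mul (j : Fin d) : lap^[N] (pderiv j q * pderiv j u) = 0 := by
      rcases Nat.eq_zero_or_pos k with rfl | hk
      · rw [huk.pderiv_eq_zero, mul_zero, iterate_lap, map_zero]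
      · exact ih (by rw [lap_pderiv, hq, map_zero]) hqm.pderiv huk.pderiv (by omega) (by omega)
    rw [Function.iterate_succ_apply, lap_mul, hq, zero_mul, zero_add, two_mul, iterate_lap,
      map_add, map_add, map_sum, ← iterate_lap, hlap_mul]
    simp [hpderiv_mul]

end Laplacian

section GaussianMoment

open Set

theorem integral_Ioi_pow_mul_exp_neg_sq (n : ℕ) :
    ∫ x in Ioi (0 : ℝ), x ^ n * exp (-x ^ 2) = Gamma ((n + 1) / 2) / 2 := by
  rw [div_eq_inv_mul, ← one_div, ← integral_rpow_mul_exp_neg_rpow two_pos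
    (neg_one_lt_zero.trans_le n.cast_nonneg)]
  refine setIntegral_congr_fun measurableSet_Ioi fun x _ => ?_
  norm_cast

def gaussianMoment (n : ℕ) : ℝ := ∫ x : ℝ, x ^ n * exp (-x ^ 2)

theorem integrable_pow_mul_exp_neg_sq (n : ℕ) :
    Integrable fun x : ℝ => x ^ n * exp (-x ^ 2) := by
  simpa [Real.rpow_natCast] using
    integrable_rpow_mul_exp_neg_mul_sq one_pos (neg_one_lt_zero.trans_le n.cast_nonneg)

theorem gaussianMoment_of_odd {n : ℕ} (hn : Odd n) : gaussianMoment n = 0 := by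
  have h := integral_neg_eq_self (fun x : ℝ => x ^ n * exp (-x ^ 2)) volume
  simp only [hn.neg_pow, neg_sq, neg_mul, integral_neg] at h
  rw [gaussianMoment]
  linarith

theorem gaussianMoment_of_even {n : ℕ} (hn : Even n) :
    gaussianMoment n = Gamma ((n + 1) / 2) := by
  calc gaussianMoment n = ∫ x : ℝ, |x| ^ n * exp (-|x| ^ 2) := by
        simp only [gaussianMoment, hn.pow_abs, sq_abs]
    _ = Gamma ((n + 1) / 2) := by
      rw [integral_comp_abs (f := fun x => x ^ n * exp (-x ^ 2)), integral_Ioi_pow_mul_exp_neg_sq]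
      ring

theorem gaussianMoment_add_two (n : ℕ) :
    gaussianMoment (n + 2) = (n + 1) / 2 * gaussianMoment n := by
  rcases Nat.even_or_odd n with hn | hn
  · rw [gaussianMoment_of_even hn, gaussianMoment_of_even (hn.add even_two),
      ← Real.Gamma_add_one (by positivity)]
    push_cast
    ring_nf
  · rw [gaussianMoment_of_odd hn, gaussianMoment_of_odd (hn.add_even even_two), mul_zero]

/-- `∫ (xᵏ)'' e^{-x²} dx = 2k ∫ xᵏ e^{-x²} dx`: the one-variable case of
`polyGaussianMoment_lap`. -/
theorem mul_pred_mul_gaussianMoment_sub_two (k : ℕ) :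
    k * (k - 1 : ℕ) * gaussianMoment (k - 2) = 2 * k * gaussianMoment k := by
  match k with
  | 0 => simp
  | 1 => simp [gaussianMoment_of_odd odd_one]
  | j + 2 =>
    rw [Nat.add_sub_cancel, Nat.add_sub_assoc one_le_two, gaussianMoment_add_two]
    push_cast
    ring

end GaussianMoment

section PolyGaussianMoment

variable {d : ℕ}

/-- `p ↦ ∫ p(x) e^{-‖x‖²} dx`, defined monomialwise by Fubini
(see `integral_evalE_mul_exp_neg_norm_sq`). -/
def polyGaussianMoment (d : ℕ) : MvPolynomial (Fin d) ℝ →ₗ[ℝ] ℝ :=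
  (basisMonomials (Fin d) ℝ).constr ℝ fun α => ∏ i, gaussianMoment (α i)

theorem polyGaussianMoment_monomial (α : Fin d →₀ ℕ) (c : ℝ) :
    polyGaussianMoment d (monomial α c) = c * ∏ i, gaussianMoment (α i) := by
  have hbasis : monomial α c = c • basisMonomials (Fin d) ℝ α := by
    rw [coe_basisMonomials, smul_monomial, smul_eq_mul, mul_one]
  rw [hbasis, map_smul, polyGaussianMoment, Module.Basis.constr_basis, smul_eq_mul]

theorem polyGaussianMoment_lap_monomial (α : Fin d →₀ ℕ) (c : ℝ) :
    polyGaussianMoment d (lap (monomial α c))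
      = 2 * α.degree * polyGaussianMoment d (monomial α c) := by
  have hpderiv (j : Fin d) : pderiv j (pderiv j (monomial α c))
      = monomial (α - Finsupp.single j 2) (c * α j * (α j - 1 : ℕ)) := by
    rw [pderiv_monomial, pderiv_monomial, tsub_tsub, ← Finsupp.single_add, Finsupp.tsub_apply,
      Finsupp.single_eq_same]
  have hprod (j : Fin d) (f : ℕ → ℝ) : ∏ i, f ((α - Finsupp.single j 2 : Fin d →₀ ℕ) i)
      = f (α j - 2) * ∏ i ∈ Finset.univ.erase j, f (α i) := by
    rw [← Finset.mul_prod_erase _ _ (Finset.mem_univ j), Finsupp.tsub_apply,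
      Finsupp.single_eq_same]
    congr 1
    refine Finset.prod_congr rfl fun i hi => ?_
    rw [Finsupp.tsub_apply, Finsupp.single_eq_of_ne' (Finset.ne_of_mem_erase hi).symm,
      Nat.sub_zero]
  simp only [lap, map_sum, hpderiv, polyGaussianMoment_monomial, hprod, Finsupp.degree_eq_sum]
  push_cast
  rw [Finset.mul_sum, Finset.sum_mul]
  refine Finset.sum_congr rfl fun j _ => ?_
  rw [← Finset.mul_prod_erase _ _ (Finset.mem_univ j)]
  linear_combination (c * ∏ i ∈ Finset.univ.erase j, gaussianMoment (α i)) *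
    mul_pred_mul_gaussianMoment_sub_two (α j)

theorem polyGaussianMoment_lap {p : MvPolynomial (Fin d) ℝ} {n : ℕ} (hp : p.IsHomogeneous n) :
    polyGaussianMoment d (lap p) = 2 * n * polyGaussianMoment d p := by
  rw [← p.support_sum_monomial_coeff, ← coe_lapLinearMap, map_sum, map_sum, map_sum,
    Finset.mul_sum]
  refine Finset.sum_congr rfl fun α hα => ?_
  rw [coe_lapLinearMap, polyGaussianMoment_lap_monomial, Finsupp.degree_apply,
    ← hp.degree_eq_sum_deg_support hα]

theorem polyGaussianMoment_eq_zero_of_lap_iterate_eq_zero {p : MvPolynomial (Fin d) ℝ} {n N : ℕ}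
    (hp : p.IsHomogeneous n) (hN : lap^[N] p = 0) (h : 2 * N ≤ n + 1) :
    polyGaussianMoment d p = 0 := by
  induction N generalizing p n with
  | zero => rw [show p = 0 from hN, map_zero]
  | succ N ih =>
    have hlap : polyGaussianMoment d (lap p) = 0 := ih hp.lap hN (by omega)
    rw [polyGaussianMoment_lap hp] at hlap
    have hn : (n : ℝ) ≠ 0 := by norm_cast; omega
    simpa [hn] using hlap

end PolyGaussianMoment

section GaussianIntegral

variable {d : ℕ}

theorem MvPolynomial.IsHomogeneous.evalE_smul {n : ℕ} {p : MvPolynomial (Fin d) ℝ}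
    (hp : p.IsHomogeneous n) (r : ℝ) (x : Ed d) : evalE p (r • x) = r ^ n * evalE p x :=
  hp.eval_smul r _

theorem evalE_monomial_mul_exp_neg_norm_sq (α : Fin d →₀ ℕ) (c : ℝ) :
    (fun x : Ed d => evalE (monomial α c) x * exp (-‖x‖ ^ 2))
      = (fun y : Fin d → ℝ => c * ∏ i, (y i ^ α i * exp (-y i ^ 2))) ∘ WithLp.ofLp := by
  ext x
  simp only [Function.comp_apply, evalE, eval_monomial,
    Finsupp.prod_fintype _ _ (fun _ => pow_zero _), EuclideanSpace.real_norm_sq_eq,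
    ← Finset.sum_neg_distrib, exp_sum, Finset.prod_mul_distrib]
  ring

theorem integrable_evalE_monomial_mul_exp_neg_norm_sq (α : Fin d →₀ ℕ) (c : ℝ) :
    Integrable fun x : Ed d => evalE (monomial α c) x * exp (-‖x‖ ^ 2) := by
  rw [evalE_monomial_mul_exp_neg_norm_sq]
  exact (PiLp.volume_preserving_ofLp _).integrable_comp_of_integrable
    ((Integrable.fintype_prod fun i => integrable_pow_mul_exp_neg_sq (α i)).const_mul c)

theorem integral_evalE_monomial_mul_exp_neg_norm_sq (α : Fin d →₀ ℕ) (c : ℝ) :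
    ∫ x : Ed d, evalE (monomial α c) x * exp (-‖x‖ ^ 2) = c * ∏ i, gaussianMoment (α i) := by
  rw [evalE_monomial_mul_exp_neg_norm_sq]
  refine ((PiLp.volume_preserving_ofLp (Fin d)).integral_comp
    (MeasurableEquiv.toLp 2 (Fin d → ℝ)).symm.measurableEmbedding
    (fun y : Fin d → ℝ => c * ∏ i, (y i ^ α i * exp (-y i ^ 2)))).trans ?_
  rw [integral_const_mul,
    integral_fintype_prod_volume_eq_prod fun i (t : ℝ) => t ^ α i * exp (-t ^ 2)]
  rfl

theorem integral_evalE_mul_exp_neg_norm_sq (p : MvPolynomial (Fin d) ℝ) :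
    ∫ x : Ed d, evalE p x * exp (-‖x‖ ^ 2) = polyGaussianMoment d p := by
  have hsum (x : Ed d) : evalE p x * exp (-‖x‖ ^ 2)
      = ∑ α ∈ p.support, evalE (monomial α (coeff α p)) x * exp (-‖x‖ ^ 2) := by
    conv_lhs => rw [← p.support_sum_monomial_coeff]
    simp only [evalE, map_sum, Finset.sum_mul]
  simp_rw [hsum]
  rw [integral_finsetSum _ fun α _ => integrable_evalE_monomial_mul_exp_neg_norm_sq α _]
  conv_rhs => rw [← p.support_sum_monomial_coeff]
  simp only [map_sum, integral_evalE_monomial_mul_exp_neg_norm_sq, polyGaussianMoment_monomial]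

end GaussianIntegral

section PolarCoordinates

open Set

variable {E : Type*} [NormedAddCommGroup E] [NormedSpace ℝ E] [FiniteDimensional ℝ E]
  [MeasurableSpace E] [BorelSpace E] [Nontrivial E] (μ : Measure E) [μ.IsAddHaarMeasure]

theorem integral_mul_fun_norm_addHaar_of_homogeneous {f : E → ℝ} {n : ℕ}
    (hf : ∀ (r : ℝ) (x : E), 0 < r → f (r • x) = r ^ n * f x) (g : ℝ → ℝ) :
    ∫ x, f x * g ‖x‖ ∂μ
      = (∫ y, f y ∂μ.toSphere) * ∫ r in Ioi (0 : ℝ), r ^ (Module.finrank ℝ E - 1 + n) * g r := by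
  have hpolar (z : sphere (0 : E) 1 × Ioi (0 : ℝ)) :
      f ((homeomorphUnitSphereProd E).symm z) * g ‖((homeomorphUnitSphereProd E).symm z : E)‖
        = f z.1 * ((z.2 : ℝ) ^ n * g z.2) := by
    obtain ⟨⟨y, hy⟩, ⟨r, hr⟩⟩ := z
    change f (r • y) * g ‖r • y‖ = _
    rw [hf r y hr, norm_smul, mem_sphere_zero_iff_norm.mp hy, mul_one,
      Real.norm_of_nonneg (le_of_lt hr)]
    ring
  calc ∫ x, f x * g ‖x‖ ∂μ
      = ∫ x : ({0}ᶜ : Set E), f x * g ‖(x : E)‖ ∂(μ.comap Subtype.val) := by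
        rw [integral_subtype_comap (measurableSet_singleton _).compl (fun x => f x * g ‖x‖),
          restrict_compl_singleton]
    _ = ∫ z, f z.1 * ((z.2 : ℝ) ^ n * g z.2)
          ∂(μ.toSphere.prod (Measure.volumeIoiPow (Module.finrank ℝ E - 1))) := by
        simp_rw [← hpolar]
        rw [← μ.measurePreserving_homeomorphUnitSphereProd.integral_comp
          (Homeomorph.measurableEmbedding _)]
        simp only [Homeomorph.symm_apply_apply]
    _ = (∫ y, f y ∂μ.toSphere) * ∫ r : Ioi (0 : ℝ), (r : ℝ) ^ n * g r
          ∂(Measure.volumeIoiPow (Module.finrank ℝ E - 1)) :=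
        integral_prod_mul (fun y : sphere (0 : E) 1 => f y)
          fun r : Ioi (0 : ℝ) => (r : ℝ) ^ n * g r
    _ = _ := by
        simp only [Measure.volumeIoiPow, ENNReal.ofReal]
        rw [integral_withDensity_eq_integral_smul
            (measurable_subtype_coe.pow_const _).real_toNNReal,
          integral_subtype_comap measurableSet_Ioi
            fun r => Real.toNNReal (r ^ (Module.finrank ℝ E - 1)) • (r ^ n * g r)]
        congr 1
        refine setIntegral_congr_fun measurableSet_Ioi fun r hr => ?_
        rw [NNReal.smul_def, Real.coe_toNNReal _ (pow_nonneg (le_of_lt hr) _), smul_eq_mul,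
          pow_add]
        ring

end PolarCoordinates

/-- the spherical integral of a product of a harmonic homogeneous polynomial of
degree `m` and a homogeneous polynomial of degree `l` vanishes when `l - m` is negative or odd. -/
theorem stmt1 (d m l : ℕ) (hd : 1 ≤ d)
    (q p : MvPolynomial (Fin d) ℝ)
    (hqhom : q.IsHomogeneous m) (hqharm : lap q = 0)
    (hphom : p.IsHomogeneous l)
    (hlm : (l : ℤ) - (m : ℤ) < 0 ∨ Odd ((l : ℤ) - (m : ℤ))) :
    ∫ y : sphere (0 : Ed d) 1, evalE q (y : Ed d) * evalE p (y : Ed d) ∂(sphμ d) = 0 := by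
  have hqp : (q * p).IsHomogeneous (m + l) := hqhom.mul hphom
  have hlap : lap^[(m + l + 1) / 2] (q * p) = 0 := by
    by_cases hl : l < m
    · exact lap_iterate_mul_eq_zero_of_lap_eq_zero hqharm hqhom hphom hl (by omega)
    · rcases hlm with hneg | ⟨k, hk⟩
      · omega
      · exact lap_iterate_eq_zero_of_isHomogeneous_of_lt hqp (by omega)
  have hmoment : polyGaussianMoment d (q * p) = 0 :=
    polyGaussianMoment_eq_zero_of_lap_iterate_eq_zero hqp hlap (by omega)
  have : Nonempty (Fin d) := ⟨⟨0, hd⟩⟩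
  have hpolar := integral_mul_fun_norm_addHaar_of_homogeneous volume
    (fun r x _ => hqp.evalE_smul r x) fun r => exp (-r ^ 2)
  rw [integral_evalE_mul_exp_neg_norm_sq, hmoment, integral_Ioi_pow_mul_exp_neg_sq,
    finrank_euclideanSpace_fin] at hpolar
  have hGamma : Gamma (((d - 1 + (m + l) : ℕ) + 1) / 2) / 2 ≠ 0 := by positivity
  simpa [sphμ, evalE] using (mul_eq_zero.mp hpolar.symm).resolve_right hGamma
end
end

section
/- Let λ > 0. With the Rodrigues definition C_m^λ(t) = ((-1)^m (2λ)_m / (2^m m! (λ+1/2)_m)) (1-t²)^{1/2-λ} (d/dt)^m (1-t²)^{λ+m-1/2}, the Gegenbauer polynomials satisfy the orthogonality relation (m! / ((2λ)_m B(λ+1/2, 1/2))) ∫_{-1}^{1} C_n^λ(t) C_m^λ(t) (1-t²)^{λ-1/2} dt = δ_{mn} · λ/(n+λ). -/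
open MeasureTheory MvPolynomial Finset Metric Topology Asymptotics Real

noncomputable section

/-- The Beta function `B(a,b) = Γ(a)Γ(b)/Γ(a+b)`. -/
def betaR (a b : ℝ) : ℝ := Real.Gamma a * Real.Gamma b / Real.Gamma (a + b)

/-- The Gegenbauer polynomial `C_m^λ` defined by the Rodrigues-type formula. -/
def geg (lam : ℝ) (m : ℕ) (t : ℝ) : ℝ :=
  ((-1) ^ m * poch (2 * lam) m / (2 ^ m * (m.factorial : ℝ) * poch (lam + 1 / 2) m))
    * (1 - t ^ 2) ^ ((1 : ℝ) / 2 - lam)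
    * iteratedDeriv m (fun s : ℝ => (1 - s ^ 2) ^ (lam + (m : ℝ) - 1 / 2)) t

/-- The Funk–Hecke coefficient `a_m(φ)`. -/
def aCoef (lam : ℝ) (m : ℕ) (φ : ℝ → ℝ) : ℝ :=
  ((m.factorial : ℝ) / (poch (2 * lam) m * betaR (lam + 1 / 2) (1 / 2)))
    * ∫ t in (-1 : ℝ)..1, φ t * geg lam m t * (1 - t ^ 2) ^ (lam - 1 / 2)

/-!
On `(-1, 1)` the `k`-th derivative of `(1 - t²)^α` is `(1 - t²)^(α - k)` times a polynomial of
degree at most `k`. Hence `C_n^λ` agrees on `(-1, 1)` with a polynomial of degree `n`, and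
`C_m^λ(t) (1 - t²)^(λ - 1/2)` is a constant multiple of `(d/dt)^m (1 - t²)^(λ + m - 1/2)`.
Integrating by parts `m` times (the boundary terms vanish because the exponents
`λ + m - 1/2 - k`, `k < m`, are positive) moves every derivative onto `C_n^λ`. For `n < m` this
kills the integral (`m < n` is symmetric); for `n = m` what is left is `m!` times the leading
coefficient of `C_m^λ` times `∫ (1 - t²)^(λ + m - 1/2) dt = B(λ + m + 1/2, 1/2)`, which
follows from Euler's Beta integral through `t = 2x - 1` and Legendre's duplication formula.
-/

open scoped Interval

lemma poch_succ (a : ℝ) (k : ℕ) : poch a (k + 1) = poch a k * (a + k) :=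
  Finset.prod_range_succ _ _

lemma poch_pos {a : ℝ} (ha : 0 < a) (k : ℕ) : 0 < poch a k :=
  Finset.prod_pos fun i _ => by positivity

lemma poch_add (a : ℝ) (p q : ℕ) : poch a (p + q) = poch a p * poch (a + p) q := by
  rw [poch, Finset.prod_range_add]
  congr 1
  exact Finset.prod_congr rfl fun i _ => by push_cast; ring

lemma poch_mul_add (a : ℝ) (n : ℕ) : poch a n * (a + n) = a * poch (a + 1) n := by
  rw [← poch_succ, add_comm n 1, poch_add, poch, Finset.prod_range_one]
  simp

lemma poch_two_mul (a : ℝ) (n : ℕ) :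
    poch (2 * a) (2 * n) = 4 ^ n * poch a n * poch (a + 1 / 2) n := by
  induction n with
  | zero => simp [poch]
  | succ n ih =>
    rw [show 2 * (n + 1) = 2 * n + 1 + 1 by ring, poch_succ, poch_succ, ih, poch_succ, poch_succ]
    push_cast
    ring

lemma Gamma_add_nat_eq_poch_mul {a : ℝ} (ha : 0 < a) (n : ℕ) :
    Real.Gamma (a + n) = poch a n * Real.Gamma a := by
  induction n with
  | zero => simp [poch]
  | succ n ih =>
    rw [Nat.cast_succ, ← add_assoc, Real.Gamma_add_one (by positivity), ih, poch_succ]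
    ring

lemma betaR_add_nat {a b : ℝ} (ha : 0 < a) (hb : 0 < b) (n : ℕ) :
    betaR (a + n) b * poch (a + b) n = betaR a b * poch a n := by
  have hΓ : Real.Gamma (a + b) ≠ 0 := (Real.Gamma_pos_of_pos (by positivity)).ne'
  have hP : poch (a + b) n ≠ 0 := (poch_pos (by positivity) n).ne'
  rw [betaR, betaR, Gamma_add_nat_eq_poch_mul ha, add_right_comm,
    Gamma_add_nat_eq_poch_mul (by positivity)]
  field_simp

lemma integral_rpow_mul_one_sub_rpow {a b : ℝ} (ha : 0 < a) (hb : 0 < b) :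
    ∫ x in (0 : ℝ)..1, x ^ (a - 1) * (1 - x) ^ (b - 1) = betaR a b := by
  have hcomplex : Complex.betaIntegral a b
      = ↑(∫ x in (0 : ℝ)..1, x ^ (a - 1) * (1 - x) ^ (b - 1)) := by
    rw [Complex.betaIntegral, ← intervalIntegral.integral_ofReal]
    refine intervalIntegral.integral_congr fun x hx => ?_
    rw [Set.uIcc_of_le zero_le_one] at hx
    push_cast
    rw [Complex.ofReal_cpow hx.1, Complex.ofReal_cpow (sub_nonneg.2 hx.2)]
    push_cast
    ring
  rw [show betaR a b = ProbabilityTheory.beta a b from rfl,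
    ProbabilityTheory.beta_eq_betaIntegralReal a b ha hb, hcomplex, Complex.ofReal_re]

lemma betaR_self {s : ℝ} (hs : 0 < s) : betaR s s = 2 ^ (1 - 2 * s) * betaR s (1 / 2) := by
  have hdup := Real.Gamma_mul_Gamma_add_half s
  have h1 : Real.Gamma (s + 1 / 2) ≠ 0 := (Real.Gamma_pos_of_pos (by linarith)).ne'
  have h2 : Real.Gamma (2 * s) ≠ 0 := (Real.Gamma_pos_of_pos (by linarith)).ne'
  rw [betaR, betaR, ← two_mul, Real.Gamma_one_half_eq, mul_div_assoc', div_eq_div_iff h2 h1]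
  linear_combination Real.Gamma s * hdup

lemma integral_one_sub_sq_rpow {β : ℝ} (hβ : -1 < β) :
    ∫ t in (-1 : ℝ)..1, (1 - t ^ 2) ^ β = betaR (β + 1) (1 / 2) := by
  have hsub := intervalIntegral.integral_comp_mul_sub (a := 0) (b := 1)
    (fun t : ℝ => (1 - t ^ 2) ^ β) two_ne_zero 1
  have hweight : ∫ x in (0 : ℝ)..1, (1 - (2 * x - 1) ^ 2) ^ β
      = ∫ x in (0 : ℝ)..1, 4 ^ β * (x ^ (β + 1 - 1) * (1 - x) ^ (β + 1 - 1)) := by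
    refine intervalIntegral.integral_congr fun x hx => ?_
    rw [Set.uIcc_of_le zero_le_one] at hx
    rw [add_sub_cancel_right, ← Real.mul_rpow hx.1 (sub_nonneg.2 hx.2),
      ← Real.mul_rpow (by norm_num) (mul_nonneg hx.1 (sub_nonneg.2 hx.2))]
    ring_nf
  have hpow : (4 : ℝ) ^ β * 2 ^ (1 - 2 * (β + 1)) = 1 / 2 := by
    rw [show (4 : ℝ) = 2 ^ (2 : ℝ) by norm_num, ← Real.rpow_mul zero_le_two,
      ← Real.rpow_add zero_lt_two, show 2 * β + (1 - 2 * (β + 1)) = -1 by ring,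
      Real.rpow_neg_one]
    norm_num
  calc ∫ t in (-1 : ℝ)..1, (1 - t ^ 2) ^ β
      = 2 * ∫ x in (0 : ℝ)..1, 4 ^ β * (x ^ (β + 1 - 1) * (1 - x) ^ (β + 1 - 1)) := by
        rw [← hweight, hsub]; norm_num; ring
    _ = 2 * (4 ^ β * 2 ^ (1 - 2 * (β + 1))) * betaR (β + 1) (1 / 2) := by
        rw [intervalIntegral.integral_const_mul,
          integral_rpow_mul_one_sub_rpow (by linarith) (by linarith), betaR_self (by linarith)]
        ring
    _ = betaR (β + 1) (1 / 2) := by rw [hpow]; ring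

namespace Polynomial

/-- Where `t² ≠ 1`, `(d/dt)^k (1 - t²)^α = (1 - t²)^(α - k) * rodrigues α k`. -/
def rodrigues (α : ℝ) : ℕ → ℝ[X]
  | 0 => 1
  | k + 1 => C (-2 * (α - k)) * X * rodrigues α k + (1 - X ^ 2) * derivative (rodrigues α k)

lemma natDegree_rodrigues_le (α : ℝ) (k : ℕ) : (rodrigues α k).natDegree ≤ k := by
  induction k with
  | zero => simp [rodrigues]
  | succ k ih =>
    have hderiv := (natDegree_derivative_le (rodrigues α k)).trans (Nat.sub_le_sub_right ih 1)
    rw [rodrigues]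
    refine natDegree_add_le_of_degree_le ?_ ?_
    · refine (natDegree_mul_le_of_le ((natDegree_C_mul_le _ _).trans natDegree_X_le) ih).trans ?_
      omega
    · rcases Nat.eq_zero_or_pos k with rfl | hk
      · simp [rodrigues]
      have hquad : (1 - X ^ 2 : ℝ[X]).natDegree ≤ 2 := by compute_degree
      exact (natDegree_mul_le_of_le hquad hderiv).trans (by omega)

lemma coeff_rodrigues_self (α : ℝ) (k : ℕ) :
    (rodrigues α k).coeff k = (-1) ^ k * ∏ i ∈ Finset.range k, (2 * α - i) := by
  induction k with
  | zero => simp [rodrigues]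
  | succ k ih =>
    have hP' : (derivative (rodrigues α k)).coeff (k + 1) = 0 :=
      coeff_eq_zero_of_natDegree_lt <| (natDegree_derivative_le _).trans_lt
        (by have := natDegree_rodrigues_le α k; omega)
    have hX2P' : (X ^ 2 * derivative (rodrigues α k)).coeff (k + 1)
        = k * (rodrigues α k).coeff k := by
      rcases k with _ | j
      · simp [rodrigues]
      · rw [coeff_X_pow_mul', if_pos (by omega), coeff_derivative,
          show j + 1 + 1 - 2 + 1 = j + 1 by omega, show j + 1 + 1 - 2 = j by omega]
        push_cast
        ring
    rw [rodrigues, coeff_add, mul_assoc, coeff_C_mul, coeff_X_mul, sub_mul, one_mul, coeff_sub,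
      hP', hX2P', ih, Finset.prod_range_succ, pow_succ]
    ring

lemma iterate_derivative_eq_C_of_natDegree_le {R : Type*} [CommSemiring R] {p : R[X]} {n : ℕ}
    (hp : p.natDegree ≤ n) : derivative^[n] p = C (n.factorial * p.coeff n) := by
  rw [eq_C_of_natDegree_le_zero ((natDegree_iterate_derivative p n).trans (by omega)),
    coeff_iterate_derivative, zero_add, Nat.descFactorial_self, nsmul_eq_mul]

end Polynomial

lemma hasDerivAt_one_sub_sq_rpow_mul_rodrigues (α : ℝ) (k : ℕ) {t : ℝ}
    (ht : 1 - t ^ 2 ≠ 0) :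
    HasDerivAt (fun s => (1 - s ^ 2) ^ (α - k) * (Polynomial.rodrigues α k).eval s)
      ((1 - t ^ 2) ^ (α - (k + 1 : ℕ)) * (Polynomial.rodrigues α (k + 1)).eval t) t := by
  have hbase : HasDerivAt (fun s : ℝ => 1 - s ^ 2) (-(2 * t)) t := by
    simpa using (hasDerivAt_pow 2 t).const_sub 1
  have hsplit : (1 - t ^ 2) ^ (α - k) = (1 - t ^ 2) ^ (α - k - 1) * (1 - t ^ 2) := by
    rw [← Real.rpow_add_one ht, sub_add_cancel]
  refine ((hbase.rpow_const (p := α - k) (Or.inl ht)).mul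
    ((Polynomial.rodrigues α k).hasDerivAt t)).congr_deriv ?_
  rw [Polynomial.rodrigues, Nat.cast_succ, ← sub_sub, hsplit]
  simp only [Polynomial.eval_add, Polynomial.eval_mul, Polynomial.eval_C, Polynomial.eval_X,
    Polynomial.eval_sub, Polynomial.eval_one, Polynomial.eval_pow]
  ring

lemma iteratedDeriv_one_sub_sq_rpow (α : ℝ) (k : ℕ) {t : ℝ} (ht : 1 - t ^ 2 ≠ 0) :
    iteratedDeriv k (fun s => (1 - s ^ 2) ^ α) t
      = (1 - t ^ 2) ^ (α - k) * (Polynomial.rodrigues α k).eval t := by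
  induction k generalizing t with
  | zero => simp [Polynomial.rodrigues]
  | succ k ih =>
    have hopen : IsOpen {s : ℝ | 1 - s ^ 2 ≠ 0} := isOpen_ne_fun (by fun_prop) (by fun_prop)
    rw [iteratedDeriv_succ,
      (Filter.eventuallyEq_of_mem (hopen.mem_nhds ht) fun s hs => ih hs).deriv_eq]
    exact (hasDerivAt_one_sub_sq_rpow_mul_rodrigues α k ht).deriv

lemma intervalIntegrable_one_sub_sq_rpow {c : ℝ} (hc : -1 < c) :
    IntervalIntegrable (fun t : ℝ => (1 - t ^ 2) ^ c) volume (-1) 1 := by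
  have hright : IntervalIntegrable (fun t : ℝ => (1 - t ^ 2) ^ c) volume 0 1 := by
    have hsing : IntervalIntegrable (fun t : ℝ => (1 - t) ^ c) volume 0 1 := by
      simpa using
        ((intervalIntegral.intervalIntegrable_rpow' (a := 0) (b := 1) hc).comp_sub_left 1).symm
    have hcont : ContinuousOn (fun t : ℝ => (1 + t) ^ c) [[0, 1]] := by
      refine ContinuousOn.rpow_const (by fun_prop) fun t ht => Or.inl ?_
      rw [Set.uIcc_of_le zero_le_one] at ht
      linarith [ht.1]
    refine (hsing.mul_continuousOn hcont).congr_uIoo fun t ht => ?_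
    rw [Set.uIoo_of_le zero_le_one] at ht
    dsimp only
    rw [← Real.mul_rpow (by linarith [ht.2] : (0 : ℝ) ≤ 1 - t)
      (by linarith [ht.1] : (0 : ℝ) ≤ 1 + t)]
    ring_nf
  have hleft := (IntervalIntegrable.iff_comp_neg (by finiteness)).mp hright
  simp only [neg_sq, neg_zero] at hleft
  exact hleft.symm.trans hright

lemma one_sub_sq_pos_of_mem_Ioo {t : ℝ} (ht : t ∈ Set.Ioo (-1 : ℝ) 1) : 0 < 1 - t ^ 2 := by
  nlinarith [ht.1, ht.2]

lemma integral_mul_iteratedDeriv_succ_one_sub_sq_rpow {α : ℝ} {k : ℕ} (hk : (k : ℝ) < α)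
    (g : Polynomial ℝ) :
    ∫ t in (-1 : ℝ)..1, g.eval t * iteratedDeriv (k + 1) (fun s => (1 - s ^ 2) ^ α) t
      = -∫ t in (-1 : ℝ)..1, (Polynomial.derivative g).eval t
          * iteratedDeriv k (fun s => (1 - s ^ 2) ^ α) t := by
  have hne : ∀ t ∈ Set.Ioo (-1 : ℝ) 1, 1 - t ^ 2 ≠ 0 := fun t ht =>
    (one_sub_sq_pos_of_mem_Ioo ht).ne'
  set v := fun t => (1 - t ^ 2) ^ (α - k) * (Polynomial.rodrigues α k).eval t
  set v' := fun t => (1 - t ^ 2) ^ (α - (k + 1 : ℕ)) * (Polynomial.rodrigues α (k + 1)).eval t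
  have hv : ContinuousOn v [[-1, 1]] :=
    ((by fun_prop : Continuous fun t : ℝ => 1 - t ^ 2).rpow_const
      fun _ => Or.inr (sub_nonneg.2 hk.le)).continuousOn.mul (Polynomial.continuousOn _)
  have hv' : IntervalIntegrable v' volume (-1) 1 :=
    (intervalIntegrable_one_sub_sq_rpow (by push_cast; linarith)).mul_continuousOn
      (Polynomial.continuousOn _)
  have hvv' : ∀ t ∈ Set.Ioo (min (-1 : ℝ) 1) (max (-1) 1), HasDerivAt v (v' t) t := by
    intro t ht
    rw [min_eq_left (by norm_num), max_eq_right (by norm_num)] at ht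
    exact hasDerivAt_one_sub_sq_rpow_mul_rodrigues α k (hne t ht)
  have hibp := intervalIntegral.integral_mul_deriv_eq_deriv_mul_of_hasDerivAt
    g.continuous.continuousOn hv (fun t _ => g.hasDerivAt t) hvv'
    ((Polynomial.continuous _).intervalIntegrable _ _) hv'
  have hzero : (0 : ℝ) ^ (α - k) = 0 := Real.zero_rpow (sub_pos.2 hk).ne'
  have hlhs : ∫ t in (-1 : ℝ)..1, g.eval t * iteratedDeriv (k + 1) (fun s => (1 - s ^ 2) ^ α) t
      = ∫ t in (-1 : ℝ)..1, g.eval t * v' t :=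
    intervalIntegral.integral_congr_Ioo_of_le (by norm_num) fun t ht => by
      simp only [v', iteratedDeriv_one_sub_sq_rpow α (k + 1) (hne t ht)]
  have hrhs : ∫ t in (-1 : ℝ)..1, (Polynomial.derivative g).eval t
        * iteratedDeriv k (fun s => (1 - s ^ 2) ^ α) t
      = ∫ t in (-1 : ℝ)..1, (Polynomial.derivative g).eval t * v t :=
    intervalIntegral.integral_congr_Ioo_of_le (by norm_num) fun t ht => by
      simp only [v, iteratedDeriv_one_sub_sq_rpow α k (hne t ht)]
  rw [hlhs, hrhs, hibp]
  simp [v, hzero]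

lemma integral_mul_iteratedDeriv_one_sub_sq_rpow {α : ℝ} {m : ℕ} (hm : (m : ℝ) - 1 < α)
    (g : Polynomial ℝ) :
    ∫ t in (-1 : ℝ)..1, g.eval t * iteratedDeriv m (fun s => (1 - s ^ 2) ^ α) t
      = (-1) ^ m
          * ∫ t in (-1 : ℝ)..1, (Polynomial.derivative^[m] g).eval t * (1 - t ^ 2) ^ α := by
  induction m generalizing g with
  | zero => simp
  | succ m ih =>
    push_cast at hm
    rw [integral_mul_iteratedDeriv_succ_one_sub_sq_rpow (by linarith),
      ih (by linarith), Function.iterate_succ_apply, pow_succ]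
    ring

def gegCoeff (lam : ℝ) (m : ℕ) : ℝ :=
  (-1) ^ m * poch (2 * lam) m / (2 ^ m * (m.factorial : ℝ) * poch (lam + 1 / 2) m)

def gegPoly (lam : ℝ) (n : ℕ) : Polynomial ℝ :=
  Polynomial.C (gegCoeff lam n) * Polynomial.rodrigues (lam + n - 1 / 2) n

lemma natDegree_gegPoly_le (lam : ℝ) (n : ℕ) : (gegPoly lam n).natDegree ≤ n :=
  (Polynomial.natDegree_C_mul_le _ _).trans (Polynomial.natDegree_rodrigues_le _ n)

lemma coeff_gegPoly_self (lam : ℝ) (n : ℕ) :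
    (gegPoly lam n).coeff n = gegCoeff lam n * ((-1) ^ n * poch (2 * lam + n) n) := by
  rw [gegPoly, Polynomial.coeff_C_mul, Polynomial.coeff_rodrigues_self, poch,
    ← Finset.prod_range_reflect (fun j : ℕ => 2 * lam + n + j)]
  congr 2
  refine Finset.prod_congr rfl fun i hi => ?_
  rw [Finset.mem_range] at hi
  rw [Nat.cast_sub (by omega), Nat.cast_sub (by omega)]
  push_cast
  ring

lemma geg_eq_eval_gegPoly (lam : ℝ) (n : ℕ) {t : ℝ} (ht : t ∈ Set.Ioo (-1 : ℝ) 1) :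
    geg lam n t = (gegPoly lam n).eval t := by
  have hpos := one_sub_sq_pos_of_mem_Ioo ht
  have hcancel : (1 - t ^ 2) ^ ((1 : ℝ) / 2 - lam) * (1 - t ^ 2) ^ (lam + n - 1 / 2 - n) = 1 := by
    rw [← Real.rpow_add hpos, show 1 / 2 - lam + (lam + n - 1 / 2 - n) = 0 by ring,
      Real.rpow_zero]
  show gegCoeff lam n * _ * _ = _
  rw [iteratedDeriv_one_sub_sq_rpow _ n hpos.ne', gegPoly, Polynomial.eval_mul, Polynomial.eval_C]
  linear_combination
    (gegCoeff lam n * (Polynomial.rodrigues (lam + n - 1 / 2) n).eval t) * hcancel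

lemma geg_mul_one_sub_sq_rpow (lam : ℝ) (m : ℕ) {t : ℝ} (ht : t ∈ Set.Ioo (-1 : ℝ) 1) :
    geg lam m t * (1 - t ^ 2) ^ (lam - 1 / 2)
      = gegCoeff lam m * iteratedDeriv m (fun s => (1 - s ^ 2) ^ (lam + m - 1 / 2)) t := by
  have hcancel : (1 - t ^ 2) ^ ((1 : ℝ) / 2 - lam) * (1 - t ^ 2) ^ (lam - 1 / 2) = 1 := by
    rw [← Real.rpow_add (one_sub_sq_pos_of_mem_Ioo ht)]; norm_num
  show gegCoeff lam m * _ * _ * _ = _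
  linear_combination
    (gegCoeff lam m * iteratedDeriv m (fun s => (1 - s ^ 2) ^ (lam + m - 1 / 2)) t) * hcancel

lemma integral_geg_mul_geg {lam : ℝ} (hlam : -1 / 2 < lam) (m n : ℕ) :
    ∫ t in (-1 : ℝ)..1, geg lam n t * geg lam m t * (1 - t ^ 2) ^ (lam - 1 / 2)
      = gegCoeff lam m * (-1) ^ m * ∫ t in (-1 : ℝ)..1,
          (Polynomial.derivative^[m] (gegPoly lam n)).eval t * (1 - t ^ 2) ^ (lam + m - 1 / 2) := by
  calc ∫ t in (-1 : ℝ)..1, geg lam n t * geg lam m t * (1 - t ^ 2) ^ (lam - 1 / 2)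
      = ∫ t in (-1 : ℝ)..1, gegCoeff lam m *
          ((gegPoly lam n).eval t * iteratedDeriv m (fun s => (1 - s ^ 2) ^ (lam + m - 1 / 2)) t) :=
        intervalIntegral.integral_congr_Ioo_of_le (by norm_num) fun t ht => by
          rw [mul_assoc, geg_mul_one_sub_sq_rpow lam m ht, geg_eq_eval_gegPoly lam n ht]
          ring
    _ = _ := by
        rw [intervalIntegral.integral_const_mul,
          integral_mul_iteratedDeriv_one_sub_sq_rpow (by linarith), mul_assoc]

lemma integral_geg_mul_geg_of_lt {lam : ℝ} (hlam : -1 / 2 < lam) {m n : ℕ} (hnm : n < m) :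
    ∫ t in (-1 : ℝ)..1, geg lam n t * geg lam m t * (1 - t ^ 2) ^ (lam - 1 / 2) = 0 := by
  rw [integral_geg_mul_geg hlam,
    Polynomial.iterate_derivative_eq_zero ((natDegree_gegPoly_le lam n).trans_lt hnm)]
  simp

lemma integral_geg_mul_geg_of_ne {lam : ℝ} (hlam : -1 / 2 < lam) {m n : ℕ} (hmn : m ≠ n) :
    ∫ t in (-1 : ℝ)..1, geg lam n t * geg lam m t * (1 - t ^ 2) ^ (lam - 1 / 2) = 0 := by
  rcases hmn.lt_or_gt with hlt | hgt
  · simp_rw [mul_comm (geg lam n _) (geg lam m _)]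
    exact integral_geg_mul_geg_of_lt hlam hlt
  · exact integral_geg_mul_geg_of_lt hlam hgt

lemma integral_geg_mul_geg_self {lam : ℝ} (hlam : 0 < lam) (m : ℕ) :
    (m.factorial : ℝ) / (poch (2 * lam) m * betaR (lam + 1 / 2) (1 / 2))
        * ∫ t in (-1 : ℝ)..1, geg lam m t * geg lam m t * (1 - t ^ 2) ^ (lam - 1 / 2)
      = lam / (m + lam) := by
  have hbeta := betaR_add_nat (a := lam + 1 / 2) (b := 1 / 2) (by linarith) (by norm_num) m
  rw [show lam + 1 / 2 + 1 / 2 = lam + 1 by ring] at hbeta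
  have hdouble :
      poch (2 * lam) m * poch (2 * lam + m) m = 4 ^ m * poch lam m * poch (lam + 1 / 2) m := by
    rw [← poch_add, ← two_mul, poch_two_mul]
  have hshift := poch_mul_add lam m
  have hsign : ((-1 : ℝ) ^ m) ^ 4 = 1 := by rw [← pow_mul, mul_comm, pow_mul]; norm_num
  have hfour : ((2 : ℝ) ^ m) ^ 2 = 4 ^ m := by rw [← pow_mul, mul_comm, pow_mul]; norm_num
  have hB : 0 < betaR (lam + 1 / 2) (1 / 2) :=
    ProbabilityTheory.beta_pos (by linarith) (by norm_num)
  have h2 := poch_pos (by linarith : 0 < 2 * lam) m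
  have h3 := poch_pos (by linarith : 0 < lam + 1 / 2) m
  have h4 := poch_pos (by linarith : 0 < lam + 1) m
  have h5 : (0 : ℝ) < m.factorial := by exact_mod_cast m.factorial_pos
  rw [integral_geg_mul_geg (by linarith), Polynomial.iterate_derivative_eq_C_of_natDegree_le
    (natDegree_gegPoly_le lam m)]
  simp only [Polynomial.eval_C]
  rw [intervalIntegral.integral_const_mul, integral_one_sub_sq_rpow (by linarith),
    coeff_gegPoly_self, show lam + m - 1 / 2 + 1 = lam + 1 / 2 + m by ring, gegCoeff]
  set B := betaR (lam + 1 / 2) (1 / 2)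
  set B' := betaR (lam + 1 / 2 + m) (1 / 2)
  set P := poch (lam + 1 / 2) m
  field_simp
  rw [hsign, hfour]
  linear_combination
    (B' * (m + lam)) * hdouble + (4 ^ m * P * B') * hshift + (4 ^ m * P * lam) * hbeta

/-- orthogonality of the Gegenbauer polynomials. -/
theorem stmt12 (lam : ℝ) (hlam : 0 < lam) (m n : ℕ) :
    ((m.factorial : ℝ) / (poch (2 * lam) m * betaR (lam + 1 / 2) (1 / 2)))
        * ∫ t in (-1 : ℝ)..1, geg lam n t * geg lam m t * (1 - t ^ 2) ^ (lam - 1 / 2)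
      = (if m = n then (1 : ℝ) else 0) * (lam / ((n : ℝ) + lam)) := by
  rcases eq_or_ne m n with rfl | hmn
  · rw [if_pos rfl, one_mul, integral_geg_mul_geg_self hlam]
  · rw [if_neg hmn, zero_mul, integral_geg_mul_geg_of_ne (by linarith) hmn, mul_zero]
end
end

section
/- Let q be a harmonic homogeneous polynomial of degree m on ℝ^d. For p' a homogeneous polynomial of degree 2j - m with 2j ≥ m, we have Δ^j(q · p') = ⟨q(∇)‖x‖^{2j}, p'⟩ as constants, where ⟨u, v⟩ = (u(∇)v)(0); moreover, if j ≥ m this equals (2^m j!/(j-m)!) (q(∇) Δ^{j-m} p'), while if j < m it is 0. -/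
open MeasureTheory MvPolynomial Finset Metric Topology Asymptotics Real

noncomputable section

namespace Aux17

variable {d : ℕ}

abbrev P (d : ℕ) := MvPolynomial (Fin d) ℝ

lemma pderiv_comm (i k : Fin d) (p : P d) :
    pderiv i (pderiv k p) = pderiv k (pderiv i p) := by
  induction p using MvPolynomial.induction_on' with
  | monomial t b =>
    simp only [pderiv_monomial]
    rcases eq_or_ne i k with rfl | h
    · rfl
    · have h1 : ((t - Finsupp.single k 1 : Fin d →₀ ℕ)) i = t i := by
        simp [Finsupp.tsub_apply, Finsupp.single_apply, h.symm]
      have h2 : ((t - Finsupp.single i 1 : Fin d →₀ ℕ)) k = t k := by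
        simp [Finsupp.tsub_apply, Finsupp.single_apply, h]
      rw [h1, h2, tsub_tsub, tsub_tsub, add_comm]
      ring_nf
  | add p q hp hq => simp [map_add, hp, hq]

/-- helper: foldr composition over a list of indices -/
def mpd (s : Fin d →₀ ℕ) (l : List (Fin d)) : P d → P d :=
  (l.map (fun j => (fun q : P d => pderiv j q)^[s j])).foldr (fun g h => g ∘ h) id

lemma mpderiv_eq_mpd (s : Fin d →₀ ℕ) (p : P d) :
    mpderiv s p = mpd s (List.finRange d) p := rfl

lemma mpd_nil (s : Fin d →₀ ℕ) (p : P d) : mpd s [] p = p := rfl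

lemma mpd_cons (s : Fin d →₀ ℕ) (i : Fin d) (l : List (Fin d)) (p : P d) :
    mpd s (i :: l) p = (fun q : P d => pderiv i q)^[s i] (mpd s l p) := rfl

lemma iter_comm (i k : Fin d) (n m : ℕ) (p : P d) :
    (fun q : P d => pderiv i q)^[n] ((fun q : P d => pderiv k q)^[m] p)
      = (fun q : P d => pderiv k q)^[m] ((fun q : P d => pderiv i q)^[n] p) := by
  have h : Function.Commute (fun q : P d => pderiv i q) (fun q : P d => pderiv k q) :=
    fun p => pderiv_comm i k p
  exact (h.iterate_iterate n m) p

lemma iter_mpd_comm (s : Fin d →₀ ℕ) (l : List (Fin d)) (i : Fin d) (n : ℕ) (p : P d) :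
    (fun q : P d => pderiv i q)^[n] (mpd s l p) = mpd s l ((fun q : P d => pderiv i q)^[n] p) := by
  induction l generalizing p with
  | nil => rfl
  | cons k l ih => rw [mpd_cons, mpd_cons, iter_comm, ih]

end Aux17

namespace Aux17
variable {d : ℕ}

lemma iter_pd_add (i : Fin d) (n : ℕ) (p q : P d) :
    (fun q : P d => pderiv i q)^[n] (p + q)
      = (fun q : P d => pderiv i q)^[n] p + (fun q : P d => pderiv i q)^[n] q := by
  induction n generalizing p q with
  | zero => rfl
  | succ n ih => simp [Function.iterate_succ_apply, map_add, ih]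

lemma iter_pd_smul (i : Fin d) (n : ℕ) (c : ℝ) (p : P d) :
    (fun q : P d => pderiv i q)^[n] (c • p) = c • (fun q : P d => pderiv i q)^[n] p := by
  induction n generalizing p with
  | zero => rfl
  | succ n ih => rw [Function.iterate_succ_apply, Function.iterate_succ_apply,
      show (pderiv i) (c • p) = c • pderiv i p from Derivation.map_smul _ c p, ih]

lemma mpd_add (s : Fin d →₀ ℕ) (l : List (Fin d)) (p q : P d) :
    mpd s l (p + q) = mpd s l p + mpd s l q := by
  induction l with
  | nil => rfl
  | cons k l ih => rw [mpd_cons, mpd_cons, mpd_cons, ih, iter_pd_add]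

lemma mpd_smul (s : Fin d →₀ ℕ) (l : List (Fin d)) (c : ℝ) (p : P d) :
    mpd s l (c • p) = c • mpd s l p := by
  induction l with
  | nil => rfl
  | cons k l ih => rw [mpd_cons, mpd_cons, ih, iter_pd_smul]

lemma mpderiv_add (s : Fin d →₀ ℕ) (p q : P d) :
    mpderiv s (p + q) = mpderiv s p + mpderiv s q := mpd_add s _ p q

lemma mpderiv_smul (s : Fin d →₀ ℕ) (c : ℝ) (p : P d) :
    mpderiv s (c • p) = c • mpderiv s p := mpd_smul s _ c p

lemma mpderiv_zero (s : Fin d →₀ ℕ) : mpderiv s (0 : P d) = 0 := by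
  have := mpderiv_smul s 0 (0 : P d)
  simpa using this

lemma iter_pderiv_monomial (i : Fin d) (n : ℕ) (t : Fin d →₀ ℕ) (b : ℝ) :
    (fun q : P d => pderiv i q)^[n] (monomial t b)
      = monomial (t - Finsupp.single i n) (b * ((t i).descFactorial n : ℕ)) := by
  induction n with
  | zero => simp
  | succ n ih =>
    rw [Function.iterate_succ_apply', ih, pderiv_monomial]
    have he : t - Finsupp.single i n - Finsupp.single i 1 = t - Finsupp.single i (n + 1) := by
      rw [tsub_tsub, ← Finsupp.single_add]
    have ha : ((t - Finsupp.single i n : Fin d →₀ ℕ)) i = t i - n := by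
      simp [Finsupp.tsub_apply]
    rw [he, ha, Nat.descFactorial_succ]
    push_cast
    ring

lemma list_single_sum_apply (s : Fin d →₀ ℕ) (l : List (Fin d)) (i : Fin d) (hi : i ∉ l) :
    ((l.map fun j => Finsupp.single j (s j)).sum) i = 0 := by
  induction l with
  | nil => rfl
  | cons k l ih =>
    simp only [List.map_cons, List.sum_cons, Finsupp.add_apply]
    rw [ih (fun h => hi (List.mem_cons_of_mem _ h))]
    have : k ≠ i := fun h => hi (h ▸ List.mem_cons_self)
    simp [Finsupp.single_apply, this]

lemma mpd_monomial (s : Fin d →₀ ℕ) (l : List (Fin d)) (hl : l.Nodup) (t : Fin d →₀ ℕ) (b : ℝ) :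
    mpd s l (monomial t b)
      = monomial (t - (l.map fun j => Finsupp.single j (s j)).sum)
          (b * ((l.map fun j => ((t j).descFactorial (s j) : ℝ)).prod)) := by
  induction l with
  | nil => simp [mpd_nil]
  | cons i l ih =>
    have hi : i ∉ l := (List.nodup_cons.mp hl).1
    rw [mpd_cons, ih (List.nodup_cons.mp hl).2, iter_pderiv_monomial]
    have ha : ((t - (l.map fun j => Finsupp.single j (s j)).sum : Fin d →₀ ℕ)) i = t i := by
      rw [Finsupp.tsub_apply, list_single_sum_apply s l i hi, Nat.sub_zero]
    rw [ha]
    simp only [List.map_cons, List.sum_cons, List.prod_cons]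
    rw [tsub_tsub, add_comm ((Finsupp.single i (s i)))]
    ring_nf

lemma finsupp_sum_single_univ (s : Fin d →₀ ℕ) :
    ∑ j : Fin d, Finsupp.single j (s j) = s := by
  ext a
  rw [Finsupp.finset_sum_apply]
  simp only [Finsupp.single_apply]
  simp [Finset.sum_ite_eq' Finset.univ a]

lemma mpderiv_monomial (s t : Fin d →₀ ℕ) (b : ℝ) :
    mpderiv s (monomial t b)
      = monomial (t - s) (b * ∏ j : Fin d, ((t j).descFactorial (s j) : ℝ)) := by
  rw [mpderiv_eq_mpd, mpd_monomial s _ (List.nodup_finRange d)]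
  rw [← Fin.sum_univ_def, finsupp_sum_single_univ, ← Fin.prod_univ_def]

end Aux17

namespace Aux17
variable {d : ℕ}

lemma mpderiv_finset_sum {ι : Type*} (s : Fin d →₀ ℕ) (A : Finset ι) (f : ι → P d) :
    mpderiv s (∑ i ∈ A, f i) = ∑ i ∈ A, mpderiv s (f i) := by
  classical
  induction A using Finset.induction_on with
  | empty =>
    have h0 : mpderiv s (0 : P d) = 0 := by
      have := mpderiv_smul s 0 (0 : P d)
      simpa using this
    simpa using h0
  | insert _ _ hi ih => simp [Finset.sum_insert hi, mpderiv_add, ih]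

lemma descFactorial_add_split (n a b : ℕ) :
    n.descFactorial (a + b) = n.descFactorial a * (n - a).descFactorial b := by
  induction b with
  | zero => simp
  | succ b ih =>
    rw [← Nat.add_assoc, Nat.descFactorial_succ, ih, Nat.descFactorial_succ, Nat.sub_sub]
    ring

lemma mpderiv_mpderiv (s t : Fin d →₀ ℕ) (p : P d) :
    mpderiv (s + t) p = mpderiv s (mpderiv t p) := by
  induction p using MvPolynomial.induction_on' with
  | monomial u b =>
    rw [mpderiv_monomial, mpderiv_monomial, mpderiv_monomial]
    have he : u - (s + t) = u - t - s := by rw [tsub_tsub, add_comm]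
    rw [he]
    congr 1
    have hD : ∀ j : Fin d, ((u j).descFactorial ((s + t) j) : ℝ)
        = ((u j).descFactorial (t j) : ℝ) * (((u - t : Fin d →₀ ℕ) j).descFactorial (s j) : ℝ) := by
      intro j
      rw [Finsupp.add_apply, Finsupp.tsub_apply, add_comm (s j) (t j),
        descFactorial_add_split (u j) (t j) (s j)]
      push_cast; ring
    calc b * ∏ j : Fin d, ((u j).descFactorial ((s + t) j) : ℝ)
        = b * ∏ j : Fin d, (((u j).descFactorial (t j) : ℝ)
            * (((u - t : Fin d →₀ ℕ) j).descFactorial (s j) : ℝ)) := by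
          congr 1; exact Finset.prod_congr rfl fun j _ => hD j
      _ = b * (∏ j : Fin d, ((u j).descFactorial (t j) : ℝ))
            * ∏ j : Fin d, (((u - t : Fin d →₀ ℕ) j).descFactorial (s j) : ℝ) := by
          rw [Finset.prod_mul_distrib]; ring
  | add p q hp hq => rw [mpderiv_add, mpderiv_add, mpderiv_add, hp, hq]

lemma mpderiv_zero_index (p : P d) : mpderiv 0 p = p := by
  induction p using MvPolynomial.induction_on' with
  | monomial u b => simp [mpderiv_monomial]
  | add p q hp hq => rw [mpderiv_add, hp, hq]

lemma mpderiv_single (i : Fin d) (n : ℕ) (p : P d) :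
    mpderiv (Finsupp.single i n) p = (fun q : P d => pderiv i q)^[n] p := by
  induction p using MvPolynomial.induction_on' with
  | monomial u b =>
    rw [mpderiv_monomial, iter_pderiv_monomial]
    congr 1
    congr 1
    rw [Finset.prod_eq_single i]
    · simp
    · intro j _ hj; simp [Finsupp.single_apply, Ne.symm hj]
    · simp
  | add p q hp hq => rw [mpderiv_add, hp, hq, iter_pd_add]

-- dop lemmas
lemma dop_monomial_left (s : Fin d →₀ ℕ) (c : ℝ) (p : P d) :
    dop (monomial s c) p = c • mpderiv s p := by
  unfold dop
  exact sum_monomial_eq (by simp)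

lemma dop_add_left (u v p : P d) : dop (u + v) p = dop u p + dop v p := by
  unfold dop
  exact Finsupp.sum_add_index' (fun s => by simp) (fun s a b => add_smul a b _)

lemma dop_zero_left (p : P d) : dop 0 p = 0 := by
  unfold dop; exact Finsupp.sum_zero_index

lemma dop_smul_left (c : ℝ) (u p : P d) : dop (c • u) p = c • dop u p := by
  unfold dop
  rw [AddMonoidAlgebra.coeff_smul, Finsupp.sum_smul_index (fun s => by simp)]
  rw [Finsupp.smul_sum]
  exact Finsupp.sum_congr fun s _ => by rw [mul_smul]

lemma dop_sum_left {ι : Type*} (A : Finset ι) (f : ι → P d) (p : P d) :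
    dop (∑ i ∈ A, f i) p = ∑ i ∈ A, dop (f i) p := by
  classical
  induction A using Finset.induction_on with
  | empty => simp [dop_zero_left]
  | insert _ _ hi ih => simp [Finset.sum_insert hi, dop_add_left, ih]

lemma dop_add_right (u p q : P d) : dop u (p + q) = dop u p + dop u q := by
  unfold dop
  rw [← Finsupp.sum_add]
  exact Finsupp.sum_congr fun s _ => by rw [mpderiv_add, smul_add]

lemma dop_smul_right (c : ℝ) (u p : P d) : dop u (c • p) = c • dop u p := by
  unfold dop
  rw [Finsupp.smul_sum]
  exact Finsupp.sum_congr fun s _ => by rw [mpderiv_smul, smul_comm]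

lemma dop_C (a : ℝ) (p : P d) : dop (C a) p = a • p := by
  rw [show (C a : P d) = monomial 0 a from rfl, dop_monomial_left, mpderiv_zero_index]

lemma dop_mul (u v p : P d) : dop (u * v) p = dop u (dop v p) := by
  induction u using MvPolynomial.induction_on' with
  | monomial s c =>
    induction v using MvPolynomial.induction_on' with
    | monomial t b =>
      rw [monomial_mul, dop_monomial_left, dop_monomial_left, dop_monomial_left,
        mpderiv_smul, mpderiv_mpderiv, mul_smul]
    | add v w hv hw =>
      rw [mul_add, dop_add_left, hv, hw, dop_add_left, dop_add_right]
  | add u w hu hw =>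
    rw [add_mul, dop_add_left, dop_add_left, hu, hw]

lemma dop_X (i : Fin d) (p : P d) : dop (X i) p = pderiv i p := by
  rw [show (X i : P d) = monomial (Finsupp.single i 1) 1 by rw [← X_pow_eq_monomial, pow_one], dop_monomial_left, mpderiv_single]
  simp

end Aux17

namespace Aux17
variable {d : ℕ}

lemma lap_add (p q : P d) : lap (p + q) = lap p + lap q := by
  unfold lap
  rw [← Finset.sum_add_distrib]
  exact Finset.sum_congr rfl fun j _ => by rw [map_add, map_add]

lemma dop_one (p : P d) : dop (1 : P d) p = p := by
  rw [show (1 : P d) = monomial 0 1 from rfl, dop_monomial_left, mpderiv_zero_index, one_smul]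

lemma iterate_two (j : Fin d) (p : P d) :
    (fun q : P d => pderiv j q)^[2] p = pderiv j (pderiv j p) := rfl

lemma lap_eq_dop (p : P d) : lap p = dop (nsq d) p := by
  unfold nsq
  rw [dop_sum_left]
  unfold lap
  refine Finset.sum_congr rfl fun j _ => ?_
  rw [X_pow_eq_monomial, dop_monomial_left, mpderiv_single, one_smul, iterate_two]

lemma lap_iter (n : ℕ) (p : P d) : lap^[n] p = dop ((nsq d) ^ n) p := by
  induction n generalizing p with
  | zero => simp [dop_one]
  | succ n ih =>
    rw [Function.iterate_succ_apply, ih, lap_eq_dop, ← dop_mul, pow_succ, mul_comm]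

/-- product of factorials -/
def Wfac (s : Fin d →₀ ℕ) : ℝ := ∏ j : Fin d, ((s j).factorial : ℝ)

lemma eval0_monomial (e : Fin d →₀ ℕ) (c : ℝ) :
    eval (0 : Fin d → ℝ) (monomial e c) = if e = 0 then c else 0 := by
  rw [eval_monomial]
  rcases eq_or_ne e 0 with rfl | h
  · simp
  · obtain ⟨i, hi⟩ : ∃ i, e i ≠ 0 := by
      by_contra hc; push_neg at hc; exact h (Finsupp.ext hc)
    rw [if_neg h]
    have hz : (e.prod fun n k => (0 : Fin d → ℝ) n ^ k) = 0 := by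
      rw [Finsupp.prod]
      exact Finset.prod_eq_zero (Finsupp.mem_support_iff.mpr hi) (by simp [zero_pow hi])
    rw [hz, mul_zero]

lemma eval0_smul (c : ℝ) (p : P d) :
    eval (0 : Fin d → ℝ) (c • p) = c * eval (0 : Fin d → ℝ) p := by
  rw [smul_eq_C_mul, map_mul, eval_C]

lemma eval0_mpderiv (s : Fin d →₀ ℕ) (p : P d) :
    eval (0 : Fin d → ℝ) (mpderiv s p) = coeff s p * Wfac s := by
  induction p using MvPolynomial.induction_on' with
  | monomial t b =>
    rw [mpderiv_monomial, eval0_monomial, coeff_monomial]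
    rcases eq_or_ne t s with rfl | h
    · rw [if_pos rfl, if_pos (tsub_self t)]
      unfold Wfac
      congr 1
      exact Finset.prod_congr rfl fun j _ => by rw [Nat.descFactorial_self]
    · rw [if_neg h, zero_mul]
      by_cases hts : t - s = 0
      · rw [if_pos hts]
        have hle : t ≤ s := tsub_eq_zero_iff_le.mp hts
        obtain ⟨i, hi⟩ : ∃ i, t i ≠ s i := by
          by_contra hc; push_neg at hc; exact h (Finsupp.ext hc)
        have hlt : t i < s i := lt_of_le_of_ne (hle i) hi
        have : (∏ j : Fin d, ((t j).descFactorial (s j) : ℝ)) = 0 :=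
          Finset.prod_eq_zero (Finset.mem_univ i)
            (by rw [Nat.descFactorial_of_lt hlt]; norm_num)
        rw [this, mul_zero]
      · rw [if_neg hts]
  | add p q hp hq =>
    rw [mpderiv_add, map_add, coeff_add, hp, hq, add_mul]

lemma eval0_dop (u p : P d) :
    eval (0 : Fin d → ℝ) (dop u p) = ∑ s ∈ u.support, coeff s u * (coeff s p * Wfac s) := by
  unfold dop
  rw [Finsupp.sum, map_sum]
  exact Finset.sum_congr rfl fun s _ => by rw [eval0_smul, eval0_mpderiv]; rfl

lemma fisch_symm (u p : P d) :
    eval (0 : Fin d → ℝ) (dop u p) = eval (0 : Fin d → ℝ) (dop p u) := by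
  rw [eval0_dop, eval0_dop]
  rw [Finset.sum_subset (Finset.subset_union_left : u.support ⊆ u.support ∪ p.support)
    (fun s _ hs => by rw [MvPolynomial.notMem_support_iff.mp hs, zero_mul])]
  rw [Finset.sum_subset (Finset.subset_union_right : p.support ⊆ u.support ∪ p.support)
    (fun s _ hs => by rw [MvPolynomial.notMem_support_iff.mp hs, zero_mul])]
  exact Finset.sum_congr rfl fun s _ => by ring

end Aux17

namespace Aux17
variable {d : ℕ}

lemma degree_eq_sum_univ (t : Fin d →₀ ℕ) : t.degree = ∑ j : Fin d, t j := by
  rw [Finsupp.degree]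
  exact Finset.sum_subset (Finset.subset_univ _)
    (fun j _ hj => Finsupp.notMem_support_iff.mp hj)

lemma homog_degree {p : P d} {n : ℕ} (hp : p.IsHomogeneous n) {t : Fin d →₀ ℕ}
    (h : coeff t p ≠ 0) : t.degree = n := by
  rw [Finsupp.degree_eq_weight_one]
  exact hp h

lemma homog0_eq_C {p : P d} (hp : p.IsHomogeneous 0) : p = C (coeff 0 p) := by
  apply MvPolynomial.ext
  intro t
  rcases eq_or_ne t 0 with rfl | h
  · simp
  · rw [hp.coeff_eq_zero (by rw [Ne, Finsupp.degree_eq_zero_iff]; exact h)]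
    simp [coeff_C, Ne.symm h]

lemma mpderiv_of_homog {p : P d} {n : ℕ} (hp : p.IsHomogeneous n) (s : Fin d →₀ ℕ)
    (hs : s.degree = n) : mpderiv s p = C (coeff s p * Wfac s) := by
  conv_lhs => rw [← support_sum_monomial_coeff p]
  rw [mpderiv_finset_sum]
  rw [Finset.sum_eq_single s]
  · rw [mpderiv_monomial, tsub_self]
    rw [C_apply]
    congr 1
    unfold Wfac
    congr 1
    exact Finset.prod_congr rfl fun j _ => by rw [Nat.descFactorial_self]
  · intro t ht hts
    rw [mpderiv_monomial]
    have hdeg : t.degree = s.degree := by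
      rw [hs]; exact homog_degree hp (MvPolynomial.mem_support_iff.mp ht)
    have hlt : ∃ j, t j < s j := by
      by_contra hc
      push_neg at hc
      apply hts
      ext j
      by_contra hj
      have hj' : s j < t j := lt_of_le_of_ne (hc j) (Ne.symm hj)
      have : s.degree < t.degree := by
        rw [degree_eq_sum_univ, degree_eq_sum_univ]
        apply Finset.sum_lt_sum (fun i _ => hc i) ⟨j, Finset.mem_univ j, hj'⟩
      omega
    obtain ⟨j, hj⟩ := hlt
    have : (∏ k : Fin d, ((t k).descFactorial (s k) : ℝ)) = 0 :=
      Finset.prod_eq_zero (Finset.mem_univ j) (by rw [Nat.descFactorial_of_lt hj]; norm_num)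
    rw [this, mul_zero, map_zero]
  · intro hs'
    rw [MvPolynomial.notMem_support_iff.mp hs', monomial_zero, mpderiv_zero]

lemma dop_of_homog {u p : P d} {n : ℕ} (hu : u.IsHomogeneous n) (hp : p.IsHomogeneous n) :
    dop u p = C (eval (0 : Fin d → ℝ) (dop u p)) := by
  rw [eval0_dop]
  unfold dop
  rw [Finsupp.sum, map_sum]
  refine Finset.sum_congr rfl fun s hs => ?_
  rw [mpderiv_of_homog hp s (homog_degree hu (MvPolynomial.mem_support_iff.mp hs)),
    smul_eq_C_mul, ← map_mul]
  rfl

lemma degree_sub_single (t : Fin d →₀ ℕ) (i : Fin d) (h : 1 ≤ t i) :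
    (t - Finsupp.single i 1).degree = t.degree - 1 := by
  rw [degree_eq_sum_univ, degree_eq_sum_univ]
  have e1 : ∑ j : Fin d, (t - Finsupp.single i 1 : Fin d →₀ ℕ) j
      = ∑ j ∈ Finset.univ.erase i, (t - Finsupp.single i 1 : Fin d →₀ ℕ) j
        + (t - Finsupp.single i 1 : Fin d →₀ ℕ) i :=
    (Finset.sum_erase_add Finset.univ _ (Finset.mem_univ i)).symm
  have e2 : ∑ j : Fin d, t j = ∑ j ∈ Finset.univ.erase i, t j + t i :=
    (Finset.sum_erase_add Finset.univ _ (Finset.mem_univ i)).symm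
  have e3 : ∑ j ∈ Finset.univ.erase i, (t - Finsupp.single i 1 : Fin d →₀ ℕ) j
      = ∑ j ∈ Finset.univ.erase i, t j := by
    refine Finset.sum_congr rfl fun j hj => ?_
    have hne : i ≠ j := Ne.symm (Finset.mem_erase.mp hj).1
    simp [Finsupp.tsub_apply, Finsupp.single_apply, hne]
  have h2 : (t - Finsupp.single i 1 : Fin d →₀ ℕ) i = t i - 1 := by
    simp [Finsupp.tsub_apply]
  omega

lemma homog_pderiv {q : P d} {m : ℕ} (hq : q.IsHomogeneous (m + 1)) (i : Fin d) :
    (pderiv i q).IsHomogeneous m := by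
  conv_lhs => rw [← support_sum_monomial_coeff q]
  rw [map_sum]
  apply MvPolynomial.IsHomogeneous.sum
  intro t ht
  rw [pderiv_monomial]
  rcases Nat.eq_zero_or_pos (t i) with h0 | hpos
  · rw [h0]
    simp only [Nat.cast_zero, mul_zero, map_zero]
    exact isHomogeneous_zero _ _ _
  · apply isHomogeneous_monomial
    rw [degree_sub_single t i hpos, homog_degree hq (MvPolynomial.mem_support_iff.mp ht)]
    omega

lemma euler {q : P d} {m : ℕ} (hq : q.IsHomogeneous m) :
    ∑ i : Fin d, X i * pderiv i q = (m : ℝ) • q := by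
  conv_lhs => rw [← support_sum_monomial_coeff q]
  conv_rhs => rw [← support_sum_monomial_coeff q]
  rw [Finset.smul_sum]
  have step : ∀ t ∈ q.support, ∀ i : Fin d,
      X i * pderiv i (monomial t (coeff t q)) = (t i : ℝ) • monomial t (coeff t q) := by
    intro t _ i
    rw [pderiv_monomial]
    rcases Nat.eq_zero_or_pos (t i) with h0 | hpos
    · rw [h0]; simp
    · rw [show (X i : P d) = monomial (Finsupp.single i 1) 1 by rw [← X_pow_eq_monomial, pow_one],
        monomial_mul, one_mul,
        add_tsub_cancel_of_le (Finsupp.single_le_iff.mpr hpos), smul_monomial]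
      congr 1
      rw [smul_eq_mul]; ring
  calc ∑ i : Fin d, X i * pderiv i (∑ t ∈ q.support, monomial t (coeff t q))
      = ∑ t ∈ q.support, ∑ i : Fin d, X i * pderiv i (monomial t (coeff t q)) := by
        rw [Finset.sum_comm]
        exact Finset.sum_congr rfl fun i _ => by rw [map_sum, Finset.mul_sum]
    _ = ∑ t ∈ q.support, (m : ℝ) • monomial t (coeff t q) := by
        refine Finset.sum_congr rfl fun t ht => ?_
        rw [Finset.sum_congr rfl (fun i _ => step t ht i), ← Finset.sum_smul]
        congr 1
        rw [← Nat.cast_sum, ← degree_eq_sum_univ,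
          homog_degree hq (MvPolynomial.mem_support_iff.mp ht)]

end Aux17

namespace Aux17
variable {d : ℕ}

lemma two_eq_C : (2 : P d) = C (2 : ℝ) := by rw [map_ofNat]

lemma pdX (k i : Fin d) : pderiv k (X i : P d) = if k = i then 1 else 0 := by
  rcases eq_or_ne k i with rfl | h
  · rw [pderiv_X_self, if_pos rfl]
  · rw [pderiv_X_of_ne (Ne.symm h), if_neg h]

lemma pderiv_nsq (i : Fin d) : pderiv i (nsq d) = 2 * X i := by
  unfold nsq
  rw [map_sum]
  rw [Finset.sum_eq_single i]
  · rw [pderiv_pow, pderiv_X_self]; norm_num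
  · intro j _ hj
    rw [pderiv_pow, pderiv_X_of_ne hj, mul_zero]
  · intro h; exact absurd (Finset.mem_univ i) h

lemma dop_mul_X (u : P d) (i : Fin d) (w : P d) :
    dop (u * X i) w = pderiv i (dop u w) := by
  rw [mul_comm, dop_mul, dop_X]

lemma lap_C (a : ℝ) : lap (C a : P d) = 0 := by
  unfold lap
  exact Finset.sum_eq_zero fun j _ => by rw [pderiv_C, map_zero]

lemma pderiv_two (i : Fin d) : pderiv i ((2 : P d)) = 0 := by
  rw [two_eq_C, pderiv_C]

lemma lap_mul_X (u : P d) (i : Fin d) :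
    lap (u * X i) = 2 * pderiv i u + lap u * X i := by
  unfold lap
  have step : ∀ k : Fin d, pderiv k (pderiv k (u * X i))
      = pderiv k (pderiv k u) * X i + 2 * pderiv k u * (if k = i then 1 else 0) := by
    intro k
    rw [pderiv_mul, pdX, map_add, pderiv_mul, pderiv_mul]
    have hite : pderiv k (if k = i then (1 : P d) else 0) = 0 := by
      rcases eq_or_ne k i with rfl | h
      · rw [if_pos rfl, pderiv_one]
      · rw [if_neg h, map_zero]
    rw [hite, mul_zero, add_zero, pdX]
    ring
  rw [Finset.sum_congr rfl fun k _ => step k, Finset.sum_add_distrib, ← Finset.sum_mul]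
  have h2 : ∑ k : Fin d, 2 * pderiv k u * (if k = i then (1 : P d) else 0) = 2 * pderiv i u := by
    rw [Finset.sum_eq_single i]
    · rw [if_pos rfl, mul_one]
    · intro j _ hj; rw [if_neg hj, mul_zero]
    · intro h; exact absurd (Finset.mem_univ i) h
  rw [h2]
  ring

lemma lap_pderiv (i : Fin d) (p : P d) : lap (pderiv i p) = pderiv i (lap p) := by
  unfold lap
  rw [map_sum]
  exact Finset.sum_congr rfl fun k _ => by rw [pderiv_comm k i, pderiv_comm k i (pderiv k p)]

/-- The key Leibniz-type identity for `dop u (nsq * g)`. -/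
lemma keyK (u g : P d) :
    dop u (nsq d * g)
      = nsq d * dop u g + 2 * (∑ i : Fin d, X i * dop (pderiv i u) g) + dop (lap u) g := by
  induction u using MvPolynomial.induction_on generalizing g with
  | C a =>
    have h2 : (∑ i : Fin d, X i * dop (pderiv i (C a : P d)) g) = 0 :=
      Finset.sum_eq_zero fun i _ => by rw [pderiv_C, dop_zero_left, mul_zero]
    rw [dop_C, dop_C, lap_C, dop_zero_left, h2, mul_zero, add_zero, add_zero, mul_smul_comm]
  | add p q hp hq =>
    have e1 : (∑ i : Fin d, X i * dop (pderiv i (p + q)) g)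
        = (∑ i : Fin d, X i * dop (pderiv i p) g) + ∑ i : Fin d, X i * dop (pderiv i q) g := by
      rw [← Finset.sum_add_distrib]
      refine Finset.sum_congr rfl fun i _ => ?_
      rw [map_add, dop_add_left, mul_add]
    rw [dop_add_left, hp g, hq g, lap_add, dop_add_left, dop_add_left, e1]
    ring
  | mul_X u i ih =>
    have hone : (∑ k : Fin d, (if i = k then (1 : P d) else 0) * dop (pderiv k u) g)
        = dop (pderiv i u) g := by
      rw [Finset.sum_eq_single i]
      · rw [if_pos rfl, one_mul]
      · intro j _ hj; rw [if_neg (Ne.symm hj), zero_mul]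
      · intro h; exact absurd (Finset.mem_univ i) h
    have hs : pderiv i (2 * (∑ k : Fin d, X k * dop (pderiv k u) g))
        = 2 * (dop (pderiv i u) g + ∑ k : Fin d, X k * pderiv i (dop (pderiv k u) g)) := by
      have hinner : pderiv i (∑ k : Fin d, X k * dop (pderiv k u) g)
          = ∑ k : Fin d, ((if i = k then (1 : P d) else 0) * dop (pderiv k u) g
              + X k * pderiv i (dop (pderiv k u) g)) := by
        rw [map_sum]
        refine Finset.sum_congr rfl fun k _ => ?_
        rw [pderiv_mul, pdX i k]
      rw [pderiv_mul, pderiv_two, zero_mul, zero_add, hinner, Finset.sum_add_distrib, hone]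
    have hL : dop (u * X i) (nsq d * g) =
        2 * X i * dop u g + nsq d * pderiv i (dop u g)
          + 2 * dop (pderiv i u) g
          + 2 * (∑ k : Fin d, X k * pderiv i (dop (pderiv k u) g))
          + pderiv i (dop (lap u) g) := by
      rw [dop_mul_X, ih g, map_add, map_add, pderiv_mul, pderiv_nsq, hs]
      ring
    have r2 : ∀ k : Fin d, dop (pderiv k (u * X i)) g
        = pderiv i (dop (pderiv k u) g) + (if k = i then dop u g else 0) := by
      intro k
      rw [pderiv_mul, pdX k i, dop_add_left, dop_mul_X]
      congr 1
      rcases eq_or_ne k i with rfl | h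
      · rw [if_pos rfl, mul_one, if_pos rfl]
      · rw [if_neg h, mul_zero, dop_zero_left, if_neg h]
    have r3 : (∑ k : Fin d, X k * dop (pderiv k (u * X i)) g)
        = (∑ k : Fin d, X k * pderiv i (dop (pderiv k u) g)) + X i * dop u g := by
      have hterm : ∀ k ∈ Finset.univ, X k * dop (pderiv k (u * X i)) g
          = X k * pderiv i (dop (pderiv k u) g) + X k * (if k = i then dop u g else 0) :=
        fun k _ => by rw [r2 k, mul_add]
      rw [Finset.sum_congr rfl hterm, Finset.sum_add_distrib]
      congr 1
      rw [Finset.sum_eq_single i]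
      · rw [if_pos rfl]
      · intro j _ hj; rw [if_neg hj, mul_zero]
      · intro h; exact absurd (Finset.mem_univ i) h
    have r4 : dop (lap (u * X i)) g = 2 * dop (pderiv i u) g + pderiv i (dop (lap u) g) := by
      rw [lap_mul_X, dop_add_left, dop_mul_X]
      congr 1
      rw [two_eq_C, dop_mul, dop_C, smul_eq_C_mul]
    rw [hL, dop_mul_X u i g, r3, r4]
    ring

end Aux17

namespace Aux17
variable {d : ℕ}

lemma mpderiv_one_ne (s : Fin d →₀ ℕ) (hs : s ≠ 0) : mpderiv s (1 : P d) = 0 := by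
  rw [show (1 : P d) = monomial 0 1 from rfl, mpderiv_monomial]
  obtain ⟨i, hi⟩ : ∃ i, s i ≠ 0 := by
    by_contra hc; push_neg at hc; exact hs (Finsupp.ext hc)
  have hz : (∏ j : Fin d, ((((0 : Fin d →₀ ℕ)) j).descFactorial (s j) : ℝ)) = 0 := by
    refine Finset.prod_eq_zero (Finset.mem_univ i) ?_
    rw [Finsupp.coe_zero, Pi.zero_apply, Nat.descFactorial_of_lt (Nat.pos_of_ne_zero hi)]
    norm_num
  rw [hz, mul_zero, monomial_zero]

lemma dop_one_right (q : P d) : dop q (1 : P d) = C (coeff 0 q) := by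
  unfold dop
  rw [Finsupp.sum]
  rw [Finset.sum_eq_single (0 : Fin d →₀ ℕ)]
  · rw [mpderiv_zero_index, smul_eq_C_mul, mul_one]
    rfl
  · intro s _ hs0
    rw [mpderiv_one_ne s hs0, smul_zero]
  · intro h0
    rw [Finsupp.notMem_support_iff.mp h0, zero_smul]

lemma keyL : ∀ (j m : ℕ) (q : P d), q.IsHomogeneous m → lap q = 0 →
    dop q ((nsq d) ^ j)
      = (if m ≤ j then ((2 : ℝ) ^ m * (j.factorial : ℝ) / (((j - m).factorial : ℝ))) else 0)
          • ((nsq d) ^ (j - m) * q) := by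
  intro j
  induction j with
  | zero =>
    intro m q hq _
    rcases Nat.eq_zero_or_pos m with rfl | hm
    · rw [pow_zero, dop_one_right, if_pos le_rfl]
      have hc : (2 : ℝ) ^ 0 * ((Nat.factorial 0 : ℕ) : ℝ) / (((0 - 0 : ℕ).factorial : ℕ) : ℝ) = 1 := by
        norm_num
      rw [hc, one_smul, one_mul]
      exact (homog0_eq_C hq).symm
    · rw [pow_zero, dop_one_right, if_neg (by omega), zero_smul]
      rw [hq.coeff_eq_zero (by rw [map_zero]; omega), map_zero]
  | succ j ihj =>
    intro m q hq hharm
    rcases Nat.eq_zero_or_pos m with rfl | hm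
    · have hc := homog0_eq_C hq
      conv_lhs => rw [hc]
      rw [dop_C, if_pos (Nat.zero_le _), Nat.sub_zero]
      have h1 : (2 : ℝ) ^ 0 * (((j+1).factorial : ℕ) : ℝ) / ((((j+1).factorial : ℕ)) : ℝ) = 1 := by
        rw [pow_zero, one_mul, div_self]
        exact_mod_cast Nat.factorial_ne_zero _
      rw [h1, one_smul]
      conv_rhs => rw [hc]
      rw [smul_eq_C_mul, mul_comm]
    · obtain ⟨m', rfl⟩ : ∃ m', m = m' + 1 := ⟨m - 1, by omega⟩
      rw [pow_succ', keyK q ((nsq d)^j), hharm, dop_zero_left, add_zero]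
      rw [ihj (m'+1) q hq hharm]
      have hIH' : ∀ i : Fin d, dop (pderiv i q) ((nsq d)^j)
          = (if m' ≤ j then ((2:ℝ)^m' * (j.factorial : ℝ) / (((j - m').factorial : ℝ))) else 0)
              • ((nsq d)^(j - m') * pderiv i q) :=
        fun i => ihj m' (pderiv i q) (homog_pderiv hq i)
          (by rw [lap_pderiv, hharm, map_zero])
      have hsum : (∑ i : Fin d, X i * dop (pderiv i q) ((nsq d)^j))
          = (if m' ≤ j then ((2:ℝ)^m' * (j.factorial : ℝ) / (((j - m').factorial : ℝ))) else 0)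
              • ((nsq d)^(j - m') * (((m' + 1 : ℕ) : ℝ) • q)) := by
        have step : ∀ i ∈ Finset.univ, X i * dop (pderiv i q) ((nsq d)^j)
            = (if m' ≤ j then ((2:ℝ)^m' * (j.factorial : ℝ) / (((j - m').factorial : ℝ))) else 0)
                • ((nsq d)^(j - m') * (X i * pderiv i q)) := by
          intro i _
          rw [hIH' i, mul_smul_comm, mul_left_comm]
        rw [Finset.sum_congr rfl step, ← Finset.smul_sum, ← Finset.mul_sum, euler hq]
      rw [hsum]
      by_cases hmj : m' + 1 ≤ j
      · rw [if_pos hmj, if_pos (by omega : m' ≤ j), if_pos (by omega : m' + 1 ≤ j + 1)]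
        have e1 : j - m' = j - (m'+1) + 1 := by omega
        have e2 : j + 1 - (m'+1) = j - (m'+1) + 1 := by omega
        rw [e1, e2]
        set n := j - (m'+1) with hn
        set a : ℝ := (2:ℝ)^(m'+1) * (j.factorial : ℝ) / ((n.factorial : ℝ)) with ha
        set b : ℝ := (2:ℝ)^m' * (j.factorial : ℝ) / (((n+1).factorial : ℝ)) with hb
        set c : ℝ := (2:ℝ)^(m'+1) * ((j+1).factorial : ℝ) / (((n+1).factorial : ℝ)) with hc
        have hco : a + 2 * ((m' + 1 : ℕ) : ℝ) * b = c := by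
          rw [ha, hb, hc, Nat.factorial_succ (n), Nat.factorial_succ j]
          have hfn : ((n.factorial : ℕ) : ℝ) ≠ 0 := by
            exact_mod_cast Nat.factorial_ne_zero _
          have hjn : (j : ℝ) = (m' : ℝ) + 1 + (n : ℝ) := by
            have : j = m' + 1 + n := by omega
            exact_mod_cast congrArg (Nat.cast : ℕ → ℝ) this
          field_simp
          push_cast
          rw [hjn]
          ring
        calc nsq d * (a • ((nsq d)^n * q))
              + 2 * (b • ((nsq d)^(n+1) * (((m' + 1 : ℕ) : ℝ) • q)))
            = (a + 2 * ((m' + 1 : ℕ) : ℝ) * b) • ((nsq d)^(n+1) * q) := by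
              rw [smul_eq_C_mul, smul_eq_C_mul, smul_eq_C_mul, smul_eq_C_mul,
                map_add, map_mul, map_mul, map_ofNat]
              ring
          _ = c • ((nsq d)^(n+1) * q) := by rw [hco]
      · by_cases hm'j : m' ≤ j
        · have hj : m' = j := by omega
          rw [if_neg hmj, if_pos hm'j, if_pos (by omega : m' + 1 ≤ j + 1), zero_smul,
            mul_zero, zero_add]
          have e1 : j - m' = 0 := by omega
          have e2 : j + 1 - (m' + 1) = 0 := by omega
          rw [e1, e2, pow_zero, one_mul, one_mul]
          set b : ℝ := (2:ℝ)^m' * (j.factorial : ℝ) / (((0:ℕ).factorial : ℝ)) with hb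
          set c : ℝ := (2:ℝ)^(m'+1) * ((j+1).factorial : ℝ) / (((0:ℕ).factorial : ℝ)) with hc
          have hco : 2 * ((m' + 1 : ℕ) : ℝ) * b = c := by
            rw [hb, hc, Nat.factorial_succ j]
            have hjm : (j : ℝ) = (m' : ℝ) := by
              exact_mod_cast congrArg (Nat.cast : ℕ → ℝ) hj.symm
            push_cast
            rw [hjm]
            ring
          calc 2 * (b • (((m' + 1 : ℕ) : ℝ) • q))
              = (2 * ((m' + 1 : ℕ) : ℝ) * b) • q := by
                rw [smul_eq_C_mul, smul_eq_C_mul, smul_eq_C_mul, map_mul, map_mul, map_ofNat]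
                ring
            _ = c • q := by rw [hco]
        · rw [if_neg hmj, if_neg hm'j, if_neg (by omega : ¬(m' + 1 ≤ j + 1)),
            zero_smul, zero_smul, zero_smul, mul_zero, mul_zero, add_zero]

end Aux17

namespace Aux17
variable {d : ℕ}

lemma nsq_homog : (nsq d).IsHomogeneous 2 := by
  unfold nsq
  exact MvPolynomial.IsHomogeneous.sum _ _ _ (fun i _ => isHomogeneous_X_pow i 2)

end Aux17

open Aux17



/-- `Δ^j (q p') = ⟨q(∇)‖x‖^{2j}, p'⟩` for harmonic homogeneous `q` of degree `m`
and `p'` homogeneous of degree `2j - m`, with the explicit evaluation. -/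
theorem stmt17 (d m j : ℕ) (hmj : m ≤ 2 * j)
    (q p' : MvPolynomial (Fin d) ℝ)
    (hqhom : q.IsHomogeneous m) (hqharm : lap q = 0)
    (hp' : p'.IsHomogeneous (2 * j - m)) :
    lap^[j] (q * p') = C (eval 0 (dop (dop q ((nsq d) ^ j)) p')) ∧
    (m ≤ j → lap^[j] (q * p')
      = C ((2 ^ m * (j.factorial : ℝ) / ((j - m).factorial : ℝ))
            * eval 0 (dop q (lap^[j - m] p')))) ∧
    (j < m → lap^[j] (q * p') = 0) := by

  have hnsqj : ((nsq d) ^ j).IsHomogeneous (2 * j) := nsq_homog.pow j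
  have hf : (q * p').IsHomogeneous (2 * j) := by
    have h := hqhom.mul hp'
    rwa [show m + (2 * j - m) = 2 * j from by omega] at h
  have key1 : lap^[j] (q * p') = C (eval 0 (dop (dop q ((nsq d) ^ j)) p')) := by
    rw [lap_iter, dop_of_homog hnsqj hf]
    congr 1
    rw [fisch_symm, mul_comm q p', dop_mul, fisch_symm p' _]
  refine ⟨key1, fun h => ?_, fun h => ?_⟩
  · rw [key1, keyL j m q hqhom hqharm, if_pos h, dop_smul_left, eval0_smul,
      mul_comm ((nsq d) ^ (j - m)) q, dop_mul, ← lap_iter]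
  · rw [key1, keyL j m q hqhom hqharm, if_neg (by omega), zero_smul, dop_zero_left,
      map_zero, map_zero]
end
end
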